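/- Let R be a commutative ring with identity that is not a local ring and which has only finitely many maximal ideals, say n of them (so n ≥ 2). Then the chromatic number of Γ(R), the clique number of Γ(R), the chromatic number of Γ_r(R), and the clique number of Γ_r(R) are all equal to n. -/

import Mathlib

universe u

/-- The co-maximal graph `Ω(R)`: vertices are the elements of `R`, with distinct `x`, `y`
adjacent iff `Rx + Ry = R`. -/
def comaximalGraph (R : Type*) [CommRing R] : SimpleGraph R where
  Adj x y := x ≠ y ∧ Ideal.span {x} ⊔ Ideal.span {y} = ⊤
  symm := ⟨fun _ _ ⟨h1, h2⟩ => ⟨h1.symm, by rwa [sup_comm]⟩⟩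
  loopless := ⟨fun _ ⟨h, _⟩ => h rfl⟩

/-- Vertices of `Γ(R)`: the elements of `R \ (U(R) ∪ J(R))`. -/
def GammaVert (R : Type*) [CommRing R] : Type _ :=
  {x : R // ¬IsUnit x ∧ x ∉ (⊥ : Ideal R).jacobson}

/-- The graph `Γ(R)` induced on `R \ (U(R) ∪ J(R))`: distinct vertices `x`, `y` are
adjacent iff `Rx + Ry = R`. -/
def Gamma (R : Type*) [CommRing R] : SimpleGraph (GammaVert R) where
  Adj a b := a ≠ b ∧ Ideal.span {a.1} ⊔ Ideal.span {b.1} = ⊤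
  symm := ⟨fun _ _ ⟨h1, h2⟩ => ⟨h1.symm, by rwa [sup_comm]⟩⟩
  loopless := ⟨fun _ ⟨h, _⟩ => h rfl⟩

/-- Vertices of `Γ_r(R)`: the principal ideals `Rx` for `x ∈ R \ (U(R) ∪ J(R))`. -/
def GammaRVert (R : Type*) [CommRing R] : Type _ :=
  {I : Ideal R // ∃ x : R, ¬IsUnit x ∧ x ∉ (⊥ : Ideal R).jacobson ∧ I = Ideal.span {x}}

/-- The graph `Γ_r(R)` on `{Rx | x ∈ R \ (U(R) ∪ J(R))}`: distinct vertices `Rx`, `Ry`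
are adjacent iff `Rx + Ry = R`. -/
def GammaR (R : Type*) [CommRing R] : SimpleGraph (GammaRVert R) where
  Adj I J := I ≠ J ∧ I.1 ⊔ J.1 = ⊤
  symm := ⟨fun _ _ ⟨h1, h2⟩ => ⟨h1.symm, by rwa [sup_comm]⟩⟩
  loopless := ⟨fun _ ⟨h, _⟩ => h rfl⟩

/-- A simple graph is a split graph if its vertex set is the disjoint union of a set
inducing a complete graph and an independent set. -/
def IsSplitGraph {V : Type*} (G : SimpleGraph V) : Prop :=
  ∃ K D : Set V, K ∪ D = Set.univ ∧ K ∩ D = ∅ ∧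
    (∀ x ∈ K, ∀ y ∈ K, x ≠ y → G.Adj x y) ∧
    (∀ x ∈ D, ∀ y ∈ D, ¬G.Adj x y)

/-- A simple graph is bipartite if its vertex set is the disjoint union of two sets
such that every edge goes between them. -/
def IsBipartiteGraph {V : Type*} (G : SimpleGraph V) : Prop :=
  ∃ A B : Set V, A ∪ B = Set.univ ∧ A ∩ B = ∅ ∧
    ∀ x y, G.Adj x y → (x ∈ A ∧ y ∈ B) ∨ (x ∈ B ∧ y ∈ A)

/-- A simple graph is complete bipartite if its vertex set is the disjoint union of two
sets such that two vertices are adjacent iff they lie in different parts. -/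
def IsCompleteBipartiteGraph {V : Type*} (G : SimpleGraph V) : Prop :=
  ∃ A B : Set V, A ∪ B = Set.univ ∧ A ∩ B = ∅ ∧
    ∀ x y, G.Adj x y ↔ ((x ∈ A ∧ y ∈ B) ∨ (x ∈ B ∧ y ∈ A))

/-!
Every non-unit `x` lies in some maximal ideal, and two comaximal non-units cannot share one, so
colouring a vertex by a maximal ideal containing it is a proper colouring of `Γ_r(R)` (and, through
`x ↦ Rx`, of `Γ(R)`) with `n` colours. Conversely, prime avoidance gives for each maximal ideal
`M` an element lying in `M` and in no other maximal ideal; these `n` elements are pairwise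
comaximal, and they are not in `J(R)` because `R` has a second maximal ideal. So both graphs
contain an `n`-clique, which squeezes chromatic and clique numbers to `n`.
-/

namespace SimpleGraph

variable {V α : Type*} {G : SimpleGraph V}

theorem chromaticNumber_eq_natCard_of_top_hom [Finite α] (f : (⊤ : SimpleGraph α) →g G)
    (C : G.Coloring α) : G.chromaticNumber = Nat.card α := by
  rw [← ENat.card_eq_coe_natCard, ← chromaticNumber_top_eq_enat_card]
  exact le_antisymm (chromaticNumber_mono_of_hom C) (chromaticNumber_mono_of_hom f)

theorem cliqueNum_eq_natCard_of_top_hom [Finite α] (f : (⊤ : SimpleGraph α) →g G)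
    (C : G.Coloring α) : G.cliqueNum = Nat.card α := by
  have := Fintype.ofFinite α
  rw [Nat.card_eq_fintype_card]
  have hbdd : BddAbove {n | ∃ s, G.IsNClique n s} :=
    ⟨Fintype.card α, fun _ ⟨_, hs⟩ => hs.card_eq ▸ hs.isClique.card_le_of_coloring C⟩
  refine le_antisymm (csSup_le ⟨0, ∅, isNClique_empty.mpr rfl⟩ fun _ ⟨_, hs⟩ => ?_) ?_
  · exact hs.card_eq ▸ hs.isClique.card_le_of_coloring C
  · exact le_csSup hbdd ⟨_, isNClique_map_copy_top ⟨f, Hom.injective_of_top_hom f⟩⟩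

end SimpleGraph

open Ideal SimpleGraph

section MaximalIdeals

variable {R : Type*} [CommRing R]

theorem exists_isMaximal_ne_of_not_isLocalRing (h : ¬IsLocalRing R) {M : Ideal R}
    (hM : M.IsMaximal) : ∃ N : Ideal R, N.IsMaximal ∧ N ≠ M := by
  by_contra! hN
  exact h (.of_unique_max_ideal ⟨M, hM, hN⟩)

theorem exists_forall_mem_iff_eq_of_isMaximal (hfin : {I : Ideal R | I.IsMaximal}.Finite)
    {M : Ideal R} (hM : M.IsMaximal) :
    ∃ x : R, ∀ N : Ideal R, N.IsMaximal → (x ∈ N ↔ N = M) := by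
  classical
  set others := hfin.toFinset.erase M
  have hnotsub : ¬(M : Set R) ⊆ ⋃ N ∈ (others : Set (Ideal R)), (N : Set R) := by
    rw [subset_union_prime M M fun N hN _ _ =>
      (hfin.mem_toFinset.mp (Finset.mem_of_mem_erase hN)).isPrime]
    rintro ⟨N, hN, hMN⟩
    obtain ⟨hNM, hN⟩ := Finset.mem_erase.mp hN
    exact hNM (hM.eq_of_le (hfin.mem_toFinset.mp hN).ne_top hMN).symm
  obtain ⟨x, hxM, hx⟩ := Set.not_subset.mp hnotsub
  simp only [Set.mem_iUnion, SetLike.mem_coe, not_exists] at hx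
  refine ⟨x, fun N hN => ⟨fun hxN => ?_, fun hNM => hNM ▸ hxM⟩⟩
  by_contra hNM
  exact hx N (by simp [others, hNM, hN]) hxN

noncomputable def separatingElement (hfin : {I : Ideal R | I.IsMaximal}.Finite)
    (M : {I : Ideal R | I.IsMaximal}) : R :=
  (exists_forall_mem_iff_eq_of_isMaximal hfin M.2).choose

theorem separatingElement_mem_iff (hfin : {I : Ideal R | I.IsMaximal}.Finite)
    (M : {I : Ideal R | I.IsMaximal}) :
    ∀ P : Ideal R, P.IsMaximal → (separatingElement hfin M ∈ P ↔ P = M) :=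
  (exists_forall_mem_iff_eq_of_isMaximal hfin M.2).choose_spec

variable {x y : R} {M N : Ideal R}

theorem span_singleton_sup_span_singleton_eq_top_of_mem_iff_eq
    (hx : ∀ P : Ideal R, P.IsMaximal → (x ∈ P ↔ P = M))
    (hy : ∀ P : Ideal R, P.IsMaximal → (y ∈ P ↔ P = N)) (hMN : M ≠ N) :
    span {x} ⊔ span {y} = ⊤ := by
  by_contra hne
  obtain ⟨P, hP, hle⟩ := exists_le_maximal _ hne
  have hxP : x ∈ P := hle (mem_sup_left (mem_span_singleton_self x))
  have hyP : y ∈ P := hle (mem_sup_right (mem_span_singleton_self y))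
  exact hMN (((hx P hP).mp hxP).symm.trans ((hy P hP).mp hyP))

theorem notMem_jacobson_bot_of_mem_iff_eq (h : ¬IsLocalRing R) (hM : M.IsMaximal)
    (hx : ∀ P : Ideal R, P.IsMaximal → (x ∈ P ↔ P = M)) :
    x ∉ (⊥ : Ideal R).jacobson := by
  obtain ⟨N, hN, hNM⟩ := exists_isMaximal_ne_of_not_isLocalRing h hM
  have hJN : (⊥ : Ideal R).jacobson ≤ N :=
    sInf_le (show N ∈ {J : Ideal R | ⊥ ≤ J ∧ J.IsMaximal} from ⟨bot_le, hN⟩)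
  exact fun hxJ => hNM ((hx N hN).mp (hJN hxJ))

end MaximalIdeals

section Gamma

variable {R : Type*} [CommRing R]

theorem GammaRVert.ne_top (I : GammaRVert R) : I.1 ≠ ⊤ := by
  obtain ⟨x, hx, -, hI⟩ := I.2
  rwa [hI, Ne, span_singleton_eq_top]

def GammaVert.toGammaRVert (a : GammaVert R) : GammaRVert R :=
  Subtype.mk (span {a.1}) ⟨a.1, a.2.1, a.2.2, rfl⟩

theorem GammaR.adj_iff {I J : GammaRVert R} : (GammaR R).Adj I J ↔ I.1 ⊔ J.1 = ⊤ := by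
  refine ⟨And.right, fun h => ⟨fun hIJ => ?_, h⟩⟩
  rw [hIJ, sup_idem] at h
  exact J.ne_top h

theorem Gamma.adj_iff {a b : GammaVert R} :
    (Gamma R).Adj a b ↔ span {a.1} ⊔ span {b.1} = ⊤ := by
  refine ⟨And.right, fun h => ⟨fun hab => ?_, h⟩⟩
  rw [hab, sup_idem] at h
  exact b.toGammaRVert.ne_top h

def Gamma.homGammaR : Gamma R →g GammaR R where
  toFun := GammaVert.toGammaRVert
  map_rel' h := GammaR.adj_iff.mpr (Gamma.adj_iff.mp h)

noncomputable def GammaRVert.maximalAbove (I : GammaRVert R) : Ideal R :=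
  (exists_le_maximal I.1 I.ne_top).choose

theorem GammaRVert.maximalAbove_isMaximal (I : GammaRVert R) : I.maximalAbove.IsMaximal :=
  (exists_le_maximal I.1 I.ne_top).choose_spec.1

theorem GammaRVert.le_maximalAbove (I : GammaRVert R) : I.1 ≤ I.maximalAbove :=
  (exists_le_maximal I.1 I.ne_top).choose_spec.2

noncomputable def GammaR.coloringMaximal : (GammaR R).Coloring {I : Ideal R | I.IsMaximal} :=
  Coloring.mk (fun I => ⟨I.maximalAbove, I.maximalAbove_isMaximal⟩) fun {I J} hIJ hc => by
    have hJ := J.le_maximalAbove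
    rw [← Subtype.mk.inj hc] at hJ
    exact I.maximalAbove_isMaximal.ne_top
      (eq_top_iff.mpr (GammaR.adj_iff.mp hIJ ▸ sup_le I.le_maximalAbove hJ))

noncomputable def Gamma.topHom (h : ¬IsLocalRing R) (hfin : {I : Ideal R | I.IsMaximal}.Finite) :
    (⊤ : SimpleGraph {I : Ideal R | I.IsMaximal}) →g Gamma R where
  toFun M :=
    have hM := separatingElement_mem_iff hfin M
    ⟨separatingElement hfin M,
      fun hu => M.2.ne_top (eq_top_of_isUnit_mem _ ((hM M M.2).mpr rfl) hu),
      notMem_jacobson_bot_of_mem_iff_eq h M.2 hM⟩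
  map_rel' {M N} hMN := Gamma.adj_iff.mpr <|
    span_singleton_sup_span_singleton_eq_top_of_mem_iff_eq (separatingElement_mem_iff hfin M)
      (separatingElement_mem_iff hfin N) (Subtype.coe_ne_coe.mpr hMN)

end Gamma

theorem gamma_chromatic_eq_card_max_general (R : Type*) [CommRing R]
    (h : ¬IsLocalRing R) (n : ℕ)
    (hfin : {I : Ideal R | I.IsMaximal}.Finite)
    (hn : {I : Ideal R | I.IsMaximal}.ncard = n) :
    (Gamma R).chromaticNumber = (n : ℕ∞) ∧
    (Gamma R).cliqueNum = n ∧
    (GammaR R).chromaticNumber = (n : ℕ∞) ∧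
    (GammaR R).cliqueNum = n := by
  have := hfin.to_subtype
  rw [← hn, ← Nat.card_coe_set_eq]
  let f := Gamma.topHom h hfin
  let C : (GammaR R).Coloring _ := GammaR.coloringMaximal
  exact ⟨chromaticNumber_eq_natCard_of_top_hom f (C.comp Gamma.homGammaR),
    cliqueNum_eq_natCard_of_top_hom f (C.comp Gamma.homGammaR),
    chromaticNumber_eq_natCard_of_top_hom (Gamma.homGammaR.comp f) C,
    cliqueNum_eq_natCard_of_top_hom (Gamma.homGammaR.comp f) C⟩

/-- Theorem 4.5: for a non-local commutative ring `R` with exactly `n` maximal ideals,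
the chromatic numbers and clique numbers of `Γ(R)` and `Γ_r(R)` all equal `n`. -/
theorem gamma_chromatic_eq_card_max (R : Type*) [CommRing R] [Nontrivial R]
    (h : ¬IsLocalRing R) (n : ℕ)
    (hfin : {I : Ideal R | I.IsMaximal}.Finite)
    (hn : {I : Ideal R | I.IsMaximal}.ncard = n) :
    (Gamma R).chromaticNumber = (n : ℕ∞) ∧
    (Gamma R).cliqueNum = n ∧
    (GammaR R).chromaticNumber = (n : ℕ∞) ∧
    (GammaR R).cliqueNum = n :=
  gamma_chromatic_eq_card_max_general R h n hfin hn
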